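/- arXiv:2511.11297 — 3 statements merged into one kernel-verified Lean document; each statement's English description precedes it below -/
import Mathlib

section
/- If every linear extension of a partial order P is well-founded and φ : P → Q is a surjective order-preserving map to a partial order Q, then every linear extension of Q is well-founded. -/
/-- Every linear extension of the order `r` is well-founded (well-foundedness of the
strict part of the linear extension). -/
def AllLinearExtWF {α : Type*} (r : α → α → Prop) : Prop :=
  ∀ s : α → α → Prop, Reflexive s → Transitive s → (∀ a b, s a b → s b a → a = b) →
    (∀ a b, s a b ∨ s b a) → (∀ a b, r a b → s a b) →
    WellFounded (fun a b => s a b ∧ ¬ s b a)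

/-- if every linear extension of a partial order P is well-founded and
φ : P → Q is a surjective order-preserving map to a partial order Q, then every
linear extension of Q is well-founded. -/
theorem allLinearExtWF_of_surjection {P Q : Type*}
    (rP : P → P → Prop) (rQ : Q → Q → Prop)
    (hPrefl : Reflexive rP) (hPtrans : Transitive rP)
    (hPanti : ∀ a b, rP a b → rP b a → a = b)
    (hQrefl : Reflexive rQ) (hQtrans : Transitive rQ)
    (hQanti : ∀ a b, rQ a b → rQ b a → a = b)
    (φ : P → Q) (hpres : ∀ p₁ p₂, rP p₁ p₂ → rQ (φ p₁) (φ p₂))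
    (hsurj : Function.Surjective φ)
    (hP : AllLinearExtWF rP) :
    AllLinearExtWF rQ := by
  intro s hsrefl hstrans hsanti hstot hsext
  -- get a linear extension u of rP via Szpilrajn
  haveI : IsPartialOrder P rP :=
    { refl := hPrefl, trans := hPtrans, antisymm := hPanti }
  obtain ⟨u, hu, hru⟩ := extend_partialOrder rP
  -- define the lexicographic pullback relation on P
  set t : P → P → Prop := fun p₁ p₂ =>
    (s (φ p₁) (φ p₂) ∧ ¬ s (φ p₂) (φ p₁)) ∨ (φ p₁ = φ p₂ ∧ u p₁ p₂) with ht
  have htrefl : Reflexive t := fun p => Or.inr ⟨rfl, hu.refl p⟩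
  have httrans : Transitive t := by
    rintro a b c (⟨h1, h2⟩ | ⟨h1, h2⟩) (⟨h3, h4⟩ | ⟨h3, h4⟩)
    · exact Or.inl ⟨hstrans h1 h3, fun h => h2 (hstrans h3 h)⟩
    · exact Or.inl ⟨h3 ▸ h1, h3 ▸ h2⟩
    · exact Or.inl ⟨h1 ▸ h3, h1 ▸ h4⟩
    · exact Or.inr ⟨h1.trans h3, hu.trans _ _ _ h2 h4⟩
  have htanti : ∀ a b, t a b → t b a → a = b := by
    rintro a b (⟨h1, h2⟩ | ⟨h1, h2⟩) (⟨h3, h4⟩ | ⟨h3, h4⟩)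
    · exact absurd h3 h2
    · exact absurd (h3 ▸ h1) h2
    · exact absurd (h1 ▸ h3) h4
    · exact hu.antisymm _ _ h2 h4
  have httot : ∀ a b, t a b ∨ t b a := by
    intro a b
    rcases hstot (φ a) (φ b) with h | h
    · by_cases h' : s (φ b) (φ a)
      · have he : φ a = φ b := hsanti _ _ h h'
        rcases hu.total a b with h'' | h''
        · exact Or.inl (Or.inr ⟨he, h''⟩)
        · exact Or.inr (Or.inr ⟨he.symm, h''⟩)
      · exact Or.inl (Or.inl ⟨h, h'⟩)
    · by_cases h' : s (φ a) (φ b)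
      · have he : φ a = φ b := hsanti _ _ h' h
        rcases hu.total a b with h'' | h''
        · exact Or.inl (Or.inr ⟨he, h''⟩)
        · exact Or.inr (Or.inr ⟨he.symm, h''⟩)
      · exact Or.inr (Or.inl ⟨h, h'⟩)
  have htext : ∀ a b, rP a b → t a b := by
    intro a b hab
    have hs : s (φ a) (φ b) := hsext _ _ (hpres _ _ hab)
    by_cases h' : s (φ b) (φ a)
    · exact Or.inr ⟨hsanti _ _ hs h', hru _ _ hab⟩
    · exact Or.inl ⟨hs, h'⟩
  have hwf : WellFounded (fun a b => t a b ∧ ¬ t b a) :=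
    hP t htrefl httrans htanti httot htext
  -- pull back along a section of φ
  let σ : Q → P := Function.surjInv hsurj
  have hσ : ∀ q, φ (σ q) = q := Function.surjInv_eq hsurj
  refine Subrelation.wf (r := InvImage (fun a b => t a b ∧ ¬ t b a) σ) ?_
    (InvImage.wf σ hwf)
  rintro q₁ q₂ ⟨h1, h2⟩
  have hs1 : s (φ (σ q₁)) (φ (σ q₂)) := by rw [hσ, hσ]; exact h1
  have hs2 : ¬ s (φ (σ q₂)) (φ (σ q₁)) := by rw [hσ, hσ]; exact h2
  constructor
  · exact Or.inl ⟨hs1, hs2⟩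
  · rintro (⟨h3, h4⟩ | ⟨h3, h4⟩)
    · exact h4 hs1
    · exact hs2 (h3 ▸ hsrefl _)
end

section
/- (Higman's lemma) If (Q, ≤) is a well quasi-order, then the set Q* of finite sequences over Q is a well quasi-order under the subsequence-embedding order: p_1...p_n ≤* q_1...q_m iff there exist 1 ≤ i_1 < ... < i_n ≤ m with p_k ≤ q_{i_k} for all k. -/
def IsWqo {α : Type*} (r : α → α → Prop) : Prop :=
  ∀ f : ℕ → α, ∃ i j : ℕ, i < j ∧ r (f i) (f j)

/-- Higman's embedding order on finite sequences: `l₁ ≤* l₂` iff the elements of `l₁`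
can be matched, in order, with `r`-larger elements of a subsequence of `l₂`. -/
def HigmanLE {α : Type*} (r : α → α → Prop) (l₁ l₂ : List α) : Prop :=
  ∃ l' : List α, l'.Sublist l₂ ∧ List.Forall₂ r l₁ l'

section

variable {α : Type*} {r : α → α → Prop}

theorem isWqo_iff_wellQuasiOrdered : IsWqo r ↔ WellQuasiOrdered r := Iff.rfl

theorem IsWqo.refl (h : IsWqo r) (a : α) : r a a := by
  obtain ⟨_, _, _, haa⟩ := h fun _ => a
  exact haa

theorem higmanLE_iff_sublistForall₂ {l₁ l₂ : List α} :
    HigmanLE r l₁ l₂ ↔ List.SublistForall₂ r l₁ l₂ := by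
  rw [List.sublistForall₂_iff]
  exact exists_congr fun _ => and_comm

theorem WellQuasiOrdered.sublistForall₂ [IsPreorder α r] (h : WellQuasiOrdered r) :
    WellQuasiOrdered (List.SublistForall₂ r) := by
  have hlists := (Set.partiallyWellOrderedOn_univ_iff.2 h).partiallyWellOrderedOn_sublistForall₂ r
  simp only [Set.mem_univ, implies_true, Set.ofPred_true] at hlists
  exact Set.partiallyWellOrderedOn_univ_iff.1 hlists

end

theorem higman_lemma_general {Q : Type*} (r : Q → Q → Prop)
    (htrans : Transitive r)
    (hwqo : IsWqo r) :
    IsWqo (HigmanLE r) := by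
  have : IsPreorder Q r := { refl := hwqo.refl, trans := htrans }
  intro f
  obtain ⟨m, n, hmn, hle⟩ := (isWqo_iff_wellQuasiOrdered.1 hwqo).sublistForall₂ f
  exact ⟨m, n, hmn, higmanLE_iff_sublistForall₂.2 hle⟩

/-- Higman's lemma: if (Q, ≤) is a wqo then Q* with the
subsequence-embedding order is a wqo. -/
theorem higman_lemma {Q : Type*} (r : Q → Q → Prop)
    (hrefl : Reflexive r) (htrans : Transitive r)
    (hwqo : IsWqo r) :
    IsWqo (HigmanLE r) :=
  higman_lemma_general r htrans hwqo
end

section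
/- For binary strings v, w ∈ {0,1}* beginning with 0, if 2·|v| ≤ Φ(w), where Φ(w) is the number of maximal constant blocks of w, then v is a subsequence of w. -/
/-- `blocks w` = number of maximal constant blocks of the binary string `w`
(the weight Φ). -/
def blocks : List Bool → ℕ
  | [] => 0
  | [_] => 1
  | a :: b :: l => (if a = b then 0 else 1) + blocks (b :: l)

/-- `blockLengths w` = the list of lengths of the maximal constant blocks of `w`. -/
def blockLengths : List Bool → List ℕ
  | [] => []
  | [_] => [1]
  | a :: b :: l =>
      if a = b then
        match blockLengths (b :: l) with
        | [] => [1]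
        | k :: ks => (k + 1) :: ks
      else 1 :: blockLengths (b :: l)

/-- Alternating string of length `n` starting with `c`. -/
def alt : ℕ → Bool → List Bool
  | 0, _ => []
  | n + 1, c => c :: alt n (!c)

theorem alt_mono : ∀ (m n : ℕ) (c : Bool), m ≤ n → (alt m c).Sublist (alt n c)
  | 0, _, _, _ => List.nil_sublist _
  | m + 1, n + 1, c, h =>
      List.Sublist.cons₂ c (alt_mono m n (!c) (Nat.succ_le_succ_iff.mp h))

theorem alt_sublist : ∀ (w : List Bool) (c : Bool), w.head? = some c →
    (alt (blocks w) c).Sublist w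
  | [], _, h => by simp at h
  | [a], c, h => by
      simp at h; subst h; simp [blocks, alt]
  | a :: b :: l, c, h => by
      simp at h; subst h
      by_cases hab : a = b
      · subst hab
        rw [blocks, if_pos rfl, Nat.zero_add]
        exact (alt_sublist (a :: l) a rfl).cons a
      · rw [blocks, if_neg hab, Nat.add_comm, alt]
        have hb : (!a) = b := by cases a <;> cases b <;> simp_all
        rw [hb]
        exact (alt_sublist (b :: l) b rfl).cons₂ a

theorem sublist_alt : ∀ (n : ℕ) (v : List Bool) (c : Bool), v.length ≤ n →
    v.Sublist (alt (2 * n) c)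
  | 0, v, c, h => by
      rw [List.length_eq_zero_iff.mp (Nat.le_zero.mp h)]; exact List.nil_sublist _
  | n + 1, [], c, _ => List.nil_sublist _
  | n + 1, x :: rest, c, h => by
      have hr : rest.length ≤ n := Nat.succ_le_succ_iff.mp h
      have : 2 * (n + 1) = 2 * n + 1 + 1 := by ring
      rw [this, alt, alt, Bool.not_not]
      by_cases hx : x = c
      · subst hx
        exact List.Sublist.cons₂ x ((sublist_alt n rest x hr).cons (!x))
      · have : x = !c := by cases x <;> cases c <;> simp_all
        subst this
        exact ((sublist_alt n rest c hr).cons₂ (!c)).cons c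

/-- for binary strings v, w starting with 0, if 2·|v| ≤ Φ(w) then v is
a subsequence of w. -/
theorem sublist_of_two_mul_length_le_blocks (v w : List Bool)
    (hv : v.head? = some false) (hw : w.head? = some false)
    (h : 2 * v.length ≤ blocks w) :
    v.Sublist w := by
  exact ((sublist_alt v.length v false le_rfl).trans
    (alt_mono _ _ false h)).trans (alt_sublist w false hw)
end
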